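/- arXiv:2410.14992 — 2 statements merged into one kernel-verified Lean document; each statement's English description precedes it below -/
import Mathlib

section
/- Let f, g : S → ℝ be bounded functions on a nonempty finite set S, and let H ≥ 0. Define the clipped functions f̂(s) = min(f(s), (min_{s'} f(s')) + H) and ĝ(s) = min(g(s), (min_{s'} g(s')) + H). Then max_{s} (f̂(s) − ĝ(s)) ≤ max_{s} (f(s) − g(s)). -/
theorem clipping_contraction {S : Type*} [Fintype S] [Nonempty S]
    (f g : S → ℝ) (H : ℝ) (hH : 0 ≤ H) :
    Finset.univ.sup' Finset.univ_nonempty (fun s =>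
        min (f s) (Finset.univ.inf' Finset.univ_nonempty f + H)
        - min (g s) (Finset.univ.inf' Finset.univ_nonempty g + H))
      ≤ Finset.univ.sup' Finset.univ_nonempty (fun s => f s - g s) := by
  set M := Finset.univ.sup' Finset.univ_nonempty (fun s => f s - g s) with hM
  have hfg : ∀ s, f s ≤ g s + M := by
    intro s
    have := Finset.le_sup' (fun s => f s - g s) (Finset.mem_univ s)
    linarith
  have hinf : Finset.univ.inf' Finset.univ_nonempty f ≤
      Finset.univ.inf' Finset.univ_nonempty g + M := by
    obtain ⟨s, -, hs⟩ := Finset.exists_mem_eq_inf' Finset.univ_nonempty g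
    have h1 : Finset.univ.inf' Finset.univ_nonempty f ≤ f s :=
      Finset.inf'_le _ (Finset.mem_univ s)
    have := hfg s
    linarith
  apply Finset.sup'_le
  intro s _
  have h1 : min (f s) (Finset.univ.inf' Finset.univ_nonempty f + H) ≤
      min (g s) (Finset.univ.inf' Finset.univ_nonempty g + H) + M := by
    rcases le_total (g s) (Finset.univ.inf' Finset.univ_nonempty g + H) with h | h
    · rw [min_eq_left h]
      exact le_trans (min_le_left _ _) (hfg s)
    · rw [min_eq_right h]
      exact le_trans (min_le_right _ _) (by linarith)
  have h2 : min (g s) (Finset.univ.inf' Finset.univ_nonempty g + H) ≤ g s ∨ True := Or.inr trivial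
  linarith [min_le_left (f s) (Finset.univ.inf' Finset.univ_nonempty f + H)]
end

section
/- Let A, B be d×d real positive definite matrices with A ⪰ B (i.e., A − B positive semidefinite). Then for any x ∈ ℝ^d, ‖x‖_A ≤ ‖x‖_B · √(det(A)/det(B)), where ‖x‖_M = √(xᵀ M x). -/
/-!
With `S = √B`, the matrix `C = S⁻¹ A S⁻¹` satisfies `1 ≤ C` in the Loewner order, so its
eigenvalues are all at least `1` and each is bounded by their product `det C = det A / det B`.
Hence `C ≤ det C • 1`, and conjugating back by `S` gives `A ≤ (det A / det B) • B`.
-/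

open Matrix

section

open scoped MatrixOrder

namespace Matrix

variable {n : Type*} [Fintype n] [DecidableEq n]

theorem le_det_smul_one_of_one_le {C : Matrix n n ℝ} (hC : 1 ≤ C) : C ≤ C.det • 1 := by
  have hCH : C.IsHermitian :=
    sub_add_cancel C 1 ▸ (sub_nonneg.mpr hC).isSelfAdjoint.add (.one (Matrix n n ℝ))
  have one_le_eigenvalues (i : n) : 1 ≤ hCH.eigenvalues i :=
    (algebraMap_le_iff_le_spectrum (r := (1 : ℝ)) hCH.isSelfAdjoint).mp (by simpa using hC) _
      (hCH.spectrum_real_eq_range_eigenvalues ▸ Set.mem_range_self i)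
  rw [← Algebra.algebraMap_eq_smul_one]
  refine le_algebraMap_of_spectrum_le (fun x hx => ?_) hCH.isSelfAdjoint
  obtain ⟨i, rfl⟩ := hCH.spectrum_real_eq_range_eigenvalues ▸ hx
  rw [hCH.det_eq_prod_eigenvalues]
  exact Multiset.mem_le_prod_of_one_le one_le_eigenvalues (Finset.mem_univ i)

theorem PosDef.le_det_div_det_smul_of_le {A B : Matrix n n ℝ} (hB : B.PosDef) (hBA : B ≤ A) :
    A ≤ (A.det / B.det) • B := by
  set S := CFC.sqrt B
  have hSS : S * S = B := CFC.sqrt_mul_sqrt_self B hB.posSemidef.nonneg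
  have hS : IsUnit S.det := (isUnit_iff_isUnit_det S).mp (hB.isStrictlyPositive.sqrt).isUnit
  have hSinv : IsSelfAdjoint S⁻¹ := IsHermitian.inv (CFC.sqrt_nonneg B).isSelfAdjoint
  set C := S⁻¹ * A * S⁻¹
  have hSCS : A = S * C * S := by
    simp only [C, ← Matrix.mul_assoc, mul_nonsing_inv S hS, Matrix.one_mul]
    rw [Matrix.mul_assoc, nonsing_inv_mul S hS, Matrix.mul_one]
  have hC : 1 ≤ C := by
    calc (1 : Matrix n n ℝ) = S⁻¹ * B * S⁻¹ := by
          rw [← hSS, ← Matrix.mul_assoc, nonsing_inv_mul S hS, Matrix.one_mul,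
            mul_nonsing_inv S hS]
      _ ≤ C := hSinv.conjugate_le_conjugate hBA
  have hdetC : C.det = A.det / B.det := by
    rw [det_mul, det_mul, det_nonsing_inv, Ring.inverse_eq_inv', ← hSS, det_mul]
    field_simp
  calc A = S * C * S := hSCS
    _ ≤ S * (C.det • 1) * S :=
        (CFC.sqrt_nonneg B).isSelfAdjoint.conjugate_le_conjugate (le_det_smul_one_of_one_le hC)
    _ = (A.det / B.det) • B := by
        rw [hdetC, Matrix.mul_smul, Matrix.mul_one, Matrix.smul_mul, hSS]

end Matrix

end

theorem norm_comparison_det_general {d : ℕ} (A B : Matrix (Fin d) (Fin d) ℝ)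
    (hB : B.PosDef) (hAB : (A - B).PosSemidef) (x : Fin d → ℝ) :
    Real.sqrt (x ⬝ᵥ A.mulVec x)
      ≤ Real.sqrt (x ⬝ᵥ B.mulVec x) * Real.sqrt (A.det / B.det) := by
  have hle : ((A.det / B.det) • B - A).PosSemidef := hB.le_det_div_det_smul_of_le hAB
  have hquad : x ⬝ᵥ A *ᵥ x ≤ A.det / B.det * (x ⬝ᵥ B *ᵥ x) := by
    simpa [sub_mulVec, smul_mulVec] using hle.dotProduct_mulVec_nonneg x
  calc Real.sqrt (x ⬝ᵥ A *ᵥ x) ≤ Real.sqrt (A.det / B.det * (x ⬝ᵥ B *ᵥ x)) :=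
        Real.sqrt_le_sqrt hquad
    _ = Real.sqrt (x ⬝ᵥ B *ᵥ x) * Real.sqrt (A.det / B.det) := by
        rw [Real.sqrt_mul' _ (by simpa using hB.posSemidef.dotProduct_mulVec_nonneg x), mul_comm]

theorem norm_comparison_det {d : ℕ} (A B : Matrix (Fin d) (Fin d) ℝ)
    (hA : A.PosDef) (hB : B.PosDef) (hAB : (A - B).PosSemidef) (x : Fin d → ℝ) :
    Real.sqrt (x ⬝ᵥ A.mulVec x)
      ≤ Real.sqrt (x ⬝ᵥ B.mulVec x) * Real.sqrt (A.det / B.det) :=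
  norm_comparison_det_general A B hB hAB x
end
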